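/- Let λ, A > 0, and let (a_t)_{t≥1} be a sequence in ℝ^d with ‖a_t‖₂ ≤ A. Define V_0 = λI and V_t = V_{t-1} + a_t a_tᵀ. Then for all n ≥ 1, Σ_{t=1}^n ‖a_t‖²_{V_{t-1}^{-1}} ≤ 2d·max{1, A²/λ}·log(1 + nA²/(dλ)). -/

import Mathlib

open Finset Matrix

/-!
Write `u_t = ‖a_t‖²_{V_{t-1}^{-1}}`. The matrix determinant lemma gives
`det V_t = det V_{t-1} (1 + u_t)`, so `∑ log (1 + u_t) = log (det V_n / λ^d)`, and AM–GM on the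
eigenvalues bounds `det V_n` by `(tr V_n / d)^d ≤ (λ + n A² / d)^d`. Since `V_{t-1} ≥ λ I`, each
`u_t ≤ A² / λ ≤ M := max 1 (A² / λ)`, and on `[0, M]` one has `u ≤ 2 M log (1 + u)`.
-/

namespace Real

lemma le_two_mul_mul_log_one_add {u M : ℝ} (hu : 0 ≤ u) (huM : u ≤ M) (hM : 1 ≤ M) :
    u ≤ 2 * M * log (1 + u) := by
  have hu1 : 0 < 1 + u := by linarith
  have hlog : u / (1 + u) ≤ log (1 + u) := by
    have := one_sub_inv_le_log_of_pos hu1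
    rwa [← one_div, one_sub_div hu1.ne', add_sub_cancel_left] at this
  calc u ≤ 2 * M * (u / (1 + u)) := by
        rw [mul_div_assoc', le_div_iff₀ hu1]; nlinarith
    _ ≤ 2 * M * log (1 + u) := by gcongr

end Real

namespace Matrix

variable {ι : Type*} [DecidableEq ι]

theorem posDef_of_posSemidef_sub_smul_one {M : Matrix ι ι ℝ} {lam : ℝ} (hlam : 0 < lam)
    (hM : (M - lam • 1).PosSemidef) : M.PosDef := by
  simpa using (PosDef.one.smul hlam).add_posSemidef hM

variable [Fintype ι]

theorem det_add_vecMulVec {R : Type*} [CommRing R] {A : Matrix ι ι R} (hA : IsUnit A.det)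
    (u v : ι → R) : (A + vecMulVec u v).det = A.det * (1 + v ⬝ᵥ A⁻¹ *ᵥ u) := by
  rw [vecMulVec_eq Unit, det_add_replicateCol_mul_replicateRow hA, Matrix.mul_assoc,
    ← replicateCol_mulVec, det_unique (1 + _ : Matrix Unit Unit R), add_apply, one_apply_eq,
    replicateRow_mul_replicateCol_apply]

theorem PosSemidef.det_le_trace_div_card_pow {A : Matrix ι ι ℝ} (hA : A.PosSemidef) :
    A.det ≤ (A.trace / Fintype.card ι) ^ Fintype.card ι := by
  rcases isEmpty_or_nonempty ι with hι | hι
  · simp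
  set k := Fintype.card ι
  set μ := hA.isHermitian.eigenvalues
  have hk : (k : ℝ) ≠ 0 := by positivity
  have hμ : ∀ i, 0 ≤ μ i := hA.eigenvalues_nonneg
  have amgm : ∏ i, μ i ^ (k⁻¹ : ℝ) ≤ ∑ i, (k : ℝ)⁻¹ * μ i :=
    Real.geom_mean_le_arith_mean_weighted univ _ μ (fun _ _ => by positivity)
      (by rw [sum_const, card_univ, nsmul_eq_mul, mul_inv_cancel₀ hk]) (fun i _ => hμ i)
  calc A.det = (∏ i, μ i ^ (k⁻¹ : ℝ)) ^ k := by
        rw [hA.isHermitian.det_eq_prod_eigenvalues, ← prod_pow]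
        exact prod_congr rfl fun i _ =>
          (Real.rpow_inv_natCast_pow (hμ i) Fintype.card_ne_zero).symm
    _ ≤ (∑ i, (k : ℝ)⁻¹ * μ i) ^ k := by
        gcongr
        exact prod_nonneg fun i _ => Real.rpow_nonneg (hμ i) _
    _ = (A.trace / k) ^ k := by
        rw [← mul_sum, hA.isHermitian.trace_eq_sum_eigenvalues, inv_mul_eq_div]
        simp [μ]

theorem dotProduct_inv_mulVec_le {M : Matrix ι ι ℝ} {lam : ℝ} (hlam : 0 < lam)
    (hM : (M - lam • 1).PosSemidef) (x : ι → ℝ) : x ⬝ᵥ M⁻¹ *ᵥ x ≤ x ⬝ᵥ x / lam := by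
  have hdet : IsUnit M.det :=
    (isUnit_iff_isUnit_det M).mp (posDef_of_posSemidef_sub_smul_one hlam hM).isUnit
  set y := M⁻¹ *ᵥ x
  have hMy : M *ᵥ y = x := by
    rw [mulVec_mulVec, mul_nonsing_inv _ hdet, one_mulVec]
  have hy : lam * (y ⬝ᵥ y) ≤ x ⬝ᵥ y := by
    have := hM.dotProduct_mulVec_nonneg y
    rw [star_trivial, sub_mulVec, hMy, smul_mulVec, one_mulVec, dotProduct_sub,
      dotProduct_smul, dotProduct_comm y x, smul_eq_mul] at this
    linarith
  -- expanding `0 ≤ ‖x - lam y‖²` and adding `lam * hy` gives `lam (x ⬝ y) ≤ x ⬝ x`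
  have hsq := dotProduct_star_self_nonneg (x - lam • y)
  simp only [star_trivial, sub_dotProduct, dotProduct_sub, smul_dotProduct, dotProduct_smul,
    dotProduct_comm y x, smul_eq_mul] at hsq
  rw [le_div_iff₀ hlam]
  nlinarith

end Matrix

structure IsRegularizedGram {ι : Type*} [Fintype ι] [DecidableEq ι] (lam : ℝ)
    (a : ℕ → ι → ℝ) (V : ℕ → Matrix ι ι ℝ) : Prop where
  zero : V 0 = lam • 1
  succ : ∀ t ≥ 1, V t = V (t - 1) + vecMulVec (a t) (a t)

namespace IsRegularizedGram

variable {ι : Type*} [Fintype ι] [DecidableEq ι] {lam : ℝ} {a : ℕ → ι → ℝ}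
  {V : ℕ → Matrix ι ι ℝ}

theorem succ_eq (h : IsRegularizedGram lam a V) (t : ℕ) :
    V (t + 1) = V t + vecMulVec (a (t + 1)) (a (t + 1)) := by
  simpa using h.succ (t + 1) (by omega)

theorem eq_smul_one_add_sum (h : IsRegularizedGram lam a V) (t : ℕ) :
    V t = lam • 1 + ∑ s ∈ Icc 1 t, vecMulVec (a s) (a s) := by
  induction t with
  | zero => simp [h.zero]
  | succ t ih => rw [h.succ_eq, ih, sum_Icc_succ_top (by omega), add_assoc]

theorem posSemidef_sub_smul_one (h : IsRegularizedGram lam a V) (t : ℕ) :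
    (V t - lam • 1).PosSemidef := by
  rw [h.eq_smul_one_add_sum, add_sub_cancel_left]
  exact posSemidef_sum _ fun s _ => by simpa using posSemidef_vecMulVec_self_star (a s)

theorem trace_eq (h : IsRegularizedGram lam a V) (t : ℕ) :
    (V t).trace = Fintype.card ι * lam + ∑ s ∈ Icc 1 t, a s ⬝ᵥ a s := by
  simp [h.eq_smul_one_add_sum, trace_sum, mul_comm]

theorem det_eq (h : IsRegularizedGram lam a V) (hlam : 0 < lam) (t : ℕ) :
    (V t).det = lam ^ Fintype.card ι * ∏ s ∈ Icc 1 t, (1 + a s ⬝ᵥ (V (s - 1))⁻¹ *ᵥ a s) := by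
  induction t with
  | zero => simp [h.zero]
  | succ t ih =>
    have hdet : IsUnit (V t).det := (isUnit_iff_isUnit_det _).mp
      (posDef_of_posSemidef_sub_smul_one hlam (h.posSemidef_sub_smul_one t)).isUnit
    rw [h.succ_eq, det_add_vecMulVec hdet, ih, prod_Icc_succ_top (by omega), Nat.add_sub_cancel,
      mul_assoc]

theorem dotProduct_inv_mulVec_nonneg (h : IsRegularizedGram lam a V) (hlam : 0 < lam) (t : ℕ)
    (x : ι → ℝ) : 0 ≤ x ⬝ᵥ (V t)⁻¹ *ᵥ x := by
  simpa using (posDef_of_posSemidef_sub_smul_one hlam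
    (h.posSemidef_sub_smul_one t)).inv.posSemidef.dotProduct_mulVec_nonneg x

theorem trace_div_card_le (h : IsRegularizedGram lam a V) (hlam : 0 < lam) {A : ℝ}
    (ha : ∀ t ≥ 1, a t ⬝ᵥ a t ≤ A ^ 2) (n : ℕ) :
    (V n).trace / Fintype.card ι ≤ lam * (1 + n * A ^ 2 / (Fintype.card ι * lam)) := by
  rcases (Fintype.card ι).eq_zero_or_pos with hk | hk
  · simp [hk, hlam.le]
  have hsum : ∑ s ∈ Icc 1 n, a s ⬝ᵥ a s ≤ n * A ^ 2 := by
    simpa using sum_le_card_nsmul (Icc 1 n) _ _ fun s hs => ha s (mem_Icc.mp hs).1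
  have hexpand : lam * (1 + n * A ^ 2 / (Fintype.card ι * lam)) * Fintype.card ι
      = Fintype.card ι * lam + n * A ^ 2 := by
    field_simp
  rw [h.trace_eq, div_le_iff₀ (by positivity), hexpand]
  linarith

theorem prod_one_add_le (h : IsRegularizedGram lam a V) (hlam : 0 < lam) {A : ℝ}
    (ha : ∀ t ≥ 1, a t ⬝ᵥ a t ≤ A ^ 2) (n : ℕ) :
    ∏ t ∈ Icc 1 n, (1 + a t ⬝ᵥ (V (t - 1))⁻¹ *ᵥ a t)
      ≤ (1 + n * A ^ 2 / (Fintype.card ι * lam)) ^ Fintype.card ι := by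
  set k := Fintype.card ι
  have hpsd := (posDef_of_posSemidef_sub_smul_one hlam (h.posSemidef_sub_smul_one n)).posSemidef
  have hlam_k : (0 : ℝ) < lam ^ k := by positivity
  calc ∏ t ∈ Icc 1 n, (1 + a t ⬝ᵥ (V (t - 1))⁻¹ *ᵥ a t) = (V n).det / lam ^ k := by
        rw [h.det_eq hlam, mul_div_cancel_left₀ _ hlam_k.ne']
    _ ≤ (lam * (1 + n * A ^ 2 / (k * lam))) ^ k / lam ^ k := by
        gcongr
        exact hpsd.det_le_trace_div_card_pow.trans (pow_le_pow_left₀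
          (div_nonneg hpsd.trace_nonneg k.cast_nonneg) (h.trace_div_card_le hlam ha n) k)
    _ = (1 + n * A ^ 2 / (k * lam)) ^ k := by
        rw [mul_pow, mul_div_cancel_left₀ _ hlam_k.ne']

theorem sum_log_one_add_le (h : IsRegularizedGram lam a V) (hlam : 0 < lam) {A : ℝ}
    (ha : ∀ t ≥ 1, a t ⬝ᵥ a t ≤ A ^ 2) (n : ℕ) :
    ∑ t ∈ Icc 1 n, Real.log (1 + a t ⬝ᵥ (V (t - 1))⁻¹ *ᵥ a t)
      ≤ Fintype.card ι * Real.log (1 + n * A ^ 2 / (Fintype.card ι * lam)) := by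
  have hpos : ∀ t, 0 < 1 + a t ⬝ᵥ (V (t - 1))⁻¹ *ᵥ a t := fun t => by
    linarith [h.dotProduct_inv_mulVec_nonneg hlam (t - 1) (a t)]
  rw [← Real.log_prod fun t _ => (hpos t).ne', ← Real.log_pow]
  exact Real.log_le_log (prod_pos fun t _ => hpos t) (h.prod_one_add_le hlam ha n)

end IsRegularizedGram

theorem stmt_6_general (d : ℕ) (lam A : ℝ) (hlam : 0 < lam)
    (a : ℕ → Fin d → ℝ)
    (ha : ∀ t ≥ 1, Real.sqrt (a t ⬝ᵥ a t) ≤ A)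
    (V : ℕ → Matrix (Fin d) (Fin d) ℝ)
    (hV0 : V 0 = lam • (1 : Matrix (Fin d) (Fin d) ℝ))
    (hV : ∀ t ≥ 1, V t = V (t - 1) + Matrix.vecMulVec (a t) (a t)) :
    ∀ n ≥ 1, ∑ t ∈ Finset.Icc 1 n, a t ⬝ᵥ (V (t - 1))⁻¹.mulVec (a t)
      ≤ 2 * d * max 1 (A ^ 2 / lam) * Real.log (1 + n * A ^ 2 / (d * lam)) := by
  intro n _
  have h : IsRegularizedGram lam a V := ⟨hV0, hV⟩
  have hnorm : ∀ t ≥ 1, a t ⬝ᵥ a t ≤ A ^ 2 := fun t ht => (Real.sqrt_le_iff.mp (ha t ht)).2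
  set M := max 1 (A ^ 2 / lam)
  have hterm : ∀ t ∈ Icc 1 n, a t ⬝ᵥ (V (t - 1))⁻¹ *ᵥ a t
      ≤ 2 * M * Real.log (1 + a t ⬝ᵥ (V (t - 1))⁻¹ *ᵥ a t) := fun t ht =>
    Real.le_two_mul_mul_log_one_add (h.dotProduct_inv_mulVec_nonneg hlam _ _)
      (calc _ ≤ a t ⬝ᵥ a t / lam := dotProduct_inv_mulVec_le hlam (h.posSemidef_sub_smul_one _) _
        _ ≤ A ^ 2 / lam := by gcongr; exact hnorm t (mem_Icc.mp ht).1
        _ ≤ M := le_max_right _ _)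
      (le_max_left _ _)
  calc _ ≤ ∑ t ∈ Icc 1 n, 2 * M * Real.log (1 + a t ⬝ᵥ (V (t - 1))⁻¹ *ᵥ a t) := sum_le_sum hterm
    _ = 2 * M * ∑ t ∈ Icc 1 n, Real.log (1 + a t ⬝ᵥ (V (t - 1))⁻¹ *ᵥ a t) := (mul_sum ..).symm
    _ ≤ 2 * M * (d * Real.log (1 + n * A ^ 2 / (d * lam))) := by
        gcongr
        simpa using h.sum_log_one_add_le hlam hnorm n
    _ = 2 * d * M * Real.log (1 + n * A ^ 2 / (d * lam)) := by ring

theorem stmt_6 (d : ℕ) (lam A : ℝ) (hlam : 0 < lam) (hA : 0 < A)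
    (a : ℕ → Fin d → ℝ)
    (ha : ∀ t ≥ 1, Real.sqrt (a t ⬝ᵥ a t) ≤ A)
    (V : ℕ → Matrix (Fin d) (Fin d) ℝ)
    (hV0 : V 0 = lam • (1 : Matrix (Fin d) (Fin d) ℝ))
    (hV : ∀ t ≥ 1, V t = V (t - 1) + Matrix.vecMulVec (a t) (a t)) :
    ∀ n ≥ 1, ∑ t ∈ Finset.Icc 1 n, a t ⬝ᵥ (V (t - 1))⁻¹.mulVec (a t)
      ≤ 2 * d * max 1 (A ^ 2 / lam) * Real.log (1 + n * A ^ 2 / (d * lam)) :=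
  stmt_6_general d lam A hlam a ha V hV0 hV
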